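/- arXiv:2212.13604 — 3 statements merged into one kernel-verified Lean document; each statement's English description precedes it below -/
import Mathlib

section
/- Let t₀ > 0 and let K : ℝ → ℝ be a differentiable function such that K(0) = tanh(t₀)², K(t) ≥ 0 for all t ≥ 0, and for all t ≥ 0 the derivative satisfies K'(t) ≥ 2·√(K(t))·(1 − K(t)). Then for all t ≥ 0 one has K(t) ≥ tanh(t₀ + t)². -/
open Real Set Filter Topology

private lemma myHasDerivAt_tanh (x : ℝ) :
    HasDerivAt Real.tanh (1 - Real.tanh x ^ 2) x := by
  have hc : Real.cosh x ≠ 0 := (Real.cosh_pos x).ne'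
  have h := (Real.hasDerivAt_sinh x).div (Real.hasDerivAt_cosh x) hc
  have hfun : Real.tanh = fun y => Real.sinh y / Real.cosh y :=
    funext fun y => Real.tanh_eq_sinh_div_cosh y
  rw [hfun]
  refine h.congr_deriv ?_
  simp only
  rw [div_pow]
  field_simp

private lemma myTanh_nonneg {x : ℝ} (hx : 0 ≤ x) : 0 ≤ Real.tanh x := by
  rw [Real.tanh_eq_sinh_div_cosh]
  exact div_nonneg (Real.sinh_nonneg_iff.2 hx) (Real.cosh_pos x).le

private lemma myTanh_pos {x : ℝ} (hx : 0 < x) : 0 < Real.tanh x := by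
  rw [Real.tanh_eq_sinh_div_cosh]
  exact div_pos (Real.sinh_pos_iff.2 hx) (Real.cosh_pos x)

private lemma myTanh_sq_lt_one (x : ℝ) : Real.tanh x ^ 2 < 1 := by
  rw [Real.tanh_eq_sinh_div_cosh, div_pow, div_lt_one (pow_pos (Real.cosh_pos x) 2)]
  rw [Real.cosh_sq]
  linarith

/-- The ordinary differential inequality solved at the end of the proof of
Lemma 2.3.5 of the paper: if `K` is differentiable with `K 0 = tanh t₀ ^ 2`,
`K ≥ 0` on `[0, ∞)`, and `K' ≥ 2 √K (1 - K)` on `[0, ∞)`, then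
`K t ≥ tanh (t₀ + t) ^ 2` for all `t ≥ 0`. -/
theorem ode_comparison_tanh_sq
    (t₀ : ℝ) (ht₀ : 0 < t₀) (K : ℝ → ℝ)
    (hK : Differentiable ℝ K)
    (h0 : K 0 = Real.tanh t₀ ^ 2)
    (hnonneg : ∀ t, 0 ≤ t → 0 ≤ K t)
    (hineq : ∀ t, 0 ≤ t → 2 * Real.sqrt (K t) * (1 - K t) ≤ deriv K t) :
    ∀ t, 0 ≤ t → Real.tanh (t₀ + t) ^ 2 ≤ K t := by
  have htanh_cont : Continuous Real.tanh :=
    Differentiable.continuous (fun x => (myHasDerivAt_tanh x).differentiableAt)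
  have main : ∀ c ∈ Set.Ioo (0:ℝ) 1, ∀ t, 0 ≤ t → Real.tanh (t₀ + c * t) ^ 2 ≤ K t := by
    rintro c ⟨hc0, hc1⟩ t ht
    have hD : ∀ x : ℝ, HasDerivAt (fun y => Real.tanh (t₀ + c * y) ^ 2)
        (2 * Real.tanh (t₀ + c * x) * (1 - Real.tanh (t₀ + c * x) ^ 2) * c) x := by
      intro x
      have h1 : HasDerivAt (fun y : ℝ => t₀ + c * y) c x := by
        simpa using ((hasDerivAt_id x).const_mul c).const_add t₀
      have h2 := ((myHasDerivAt_tanh (t₀ + c * x)).comp x h1).pow 2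
      refine h2.congr_deriv ?_
      simp only [Function.comp]
      push_cast
      ring
    have key := image_le_of_deriv_right_lt_deriv_boundary
      (f := fun y => Real.tanh (t₀ + c * y) ^ 2)
      (f' := fun x => 2 * Real.tanh (t₀ + c * x) * (1 - Real.tanh (t₀ + c * x) ^ 2) * c)
      (a := 0) (b := t) (B := K) (B' := deriv K)
      (fun x _ => (hD x).continuousAt.continuousWithinAt)
      (fun x _ => (hD x).hasDerivWithinAt)
      (by simp [h0])
      (fun x => (hK x).hasDerivAt)
      ?_
    · exact key (Set.mem_Icc.2 ⟨ht, le_refl t⟩)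
    · intro x hx heq
      set s := t₀ + c * x with hs
      have hspos : 0 < s := by
        have : 0 ≤ c * x := mul_nonneg hc0.le hx.1
        linarith
      have htpos : 0 < Real.tanh s := myTanh_pos hspos
      have hlt1 : Real.tanh s ^ 2 < 1 := myTanh_sq_lt_one s
      have hsqrt : Real.sqrt (K x) = Real.tanh s := by
        rw [← heq, Real.sqrt_sq htpos.le]
      have hin := hineq x hx.1
      rw [hsqrt, ← heq] at hin
      have hP : 0 < 2 * Real.tanh s * (1 - Real.tanh s ^ 2) :=
        mul_pos (mul_pos two_pos htpos) (by linarith)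
      calc 2 * Real.tanh s * (1 - Real.tanh s ^ 2) * c
          < 2 * Real.tanh s * (1 - Real.tanh s ^ 2) * 1 := by
            exact mul_lt_mul_of_pos_left hc1 hP
        _ = 2 * Real.tanh s * (1 - Real.tanh s ^ 2) := by ring
        _ ≤ deriv K x := hin
  intro t ht
  haveI : (𝓝[Set.Ioo (0:ℝ) 1] 1).NeBot := right_nhdsWithin_Ioo_neBot one_pos
  have hcont : Continuous fun c : ℝ => Real.tanh (t₀ + c * t) ^ 2 := by
    exact (htanh_cont.comp (by continuity)).pow 2
  have hlim : Filter.Tendsto (fun c => Real.tanh (t₀ + c * t) ^ 2)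
      (𝓝[Set.Ioo (0:ℝ) 1] 1) (𝓝 (Real.tanh (t₀ + t) ^ 2)) := by
    have := (hcont.tendsto 1).mono_left (nhdsWithin_le_nhds (s := Set.Ioo (0:ℝ) 1))
    simpa using this
  exact le_of_tendsto hlim
    (eventually_nhdsWithin_of_forall fun c hc => main c hc t ht)
end

section
/- Let P be a nonzero polynomial in two real variables which is homogeneous of degree m ≥ 2 and harmonic, i.e. ∂²P/∂x² + ∂²P/∂y² = 0 as polynomials. Then the gradient of P vanishes only at the origin: for every point (x, y) ∈ ℝ² with (x, y) ≠ (0, 0), one has (∂P/∂x (x,y), ∂P/∂y (x,y)) ≠ (0, 0). In particular, the critical point of P at the origin is isolated. -/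
open MvPolynomial

private lemma coeff_pderiv' {σ : Type*} [DecidableEq σ] {R : Type*} [CommRing R]
    (f : MvPolynomial σ R) (i : σ) (e : σ →₀ ℕ) :
    coeff e (pderiv i f) = (e i + 1 : ℕ) * coeff (e + Finsupp.single i 1) f := by
  induction f using MvPolynomial.induction_on' with
  | monomial d a =>
    rw [pderiv_monomial]
    rcases Nat.eq_zero_or_pos (d i) with h | h
    · have h1 : d ≠ e + Finsupp.single i 1 := by
        intro hc; apply_fun (fun u => u i) at hc; simp [h] at hc
      simp [coeff_monomial, h, if_neg h1]
    · rw [coeff_monomial, coeff_monomial]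
      have hle : Finsupp.single i 1 ≤ d := by
        rw [Finsupp.single_le_iff]; omega
      by_cases hd : d = e + Finsupp.single i 1
      · have h1 : d - Finsupp.single i 1 = e := by
          rw [hd, add_tsub_cancel_right]
        have h2 : d i = e i + 1 := by
          rw [hd]; simp
        rw [if_pos hd, if_pos h1, h2]
        push_cast
        ring
      · rw [if_neg hd, if_neg, mul_zero]
        intro hc
        exact hd (by rw [← hc, tsub_add_cancel_of_le hle])
  | add p q hp hq => simp [hp, hq, mul_add]

private lemma fin2_finsupp_eq (d : Fin 2 →₀ ℕ) :
    d = Finsupp.single 0 (d 0) + Finsupp.single 1 (d 1) := by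
  ext j
  fin_cases j <;> simp

private lemma fin2_degree (d : Fin 2 →₀ ℕ) : d.degree = d 0 + d 1 := by
  rw [Finsupp.degree_apply, Finset.sum_subset (Finset.subset_univ _)
    (by intro i _ hi; simpa using hi)]
  exact Fin.sum_univ_two d

private lemma zpow_expand (n : ℕ) :
    ((X 0 + C Complex.I * X 1 : MvPolynomial (Fin 2) ℂ))^n =
      ∑ k ∈ Finset.range (n+1),
        monomial (Finsupp.single 0 (n-k) + Finsupp.single 1 k)
          ((n.choose k : ℂ) * Complex.I^k) := by
  rw [add_comm, add_pow]
  apply Finset.sum_congr rfl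
  intro k hk
  rw [mul_pow, ← C_pow, X_pow_eq_monomial, X_pow_eq_monomial,
    show ((n.choose k : ℕ) : MvPolynomial (Fin 2) ℂ) = C (n.choose k : ℂ) from
      (C_eq_coe_nat _).symm]
  rw [mul_assoc, mul_comm ((monomial (Finsupp.single 0 (n-k))) (1:ℂ)) _, C_mul_monomial,
    C_mul_monomial, monomial_mul]
  rw [add_comm (Finsupp.single (1 : Fin 2) k)]
  congr 1
  ring

private lemma coeff_zpow (n : ℕ) (d : Fin 2 →₀ ℕ) :
    coeff d (((X 0 + C Complex.I * X 1 : MvPolynomial (Fin 2) ℂ))^n) =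
      if d.degree = n then (n.choose (d 1) : ℂ) * Complex.I^(d 1) else 0 := by
  rw [zpow_expand, coeff_sum]
  by_cases hd : d.degree = n
  · rw [if_pos hd]
    have hd1 : d 1 ≤ n := by rw [fin2_degree] at hd; omega
    have hd0 : d 0 = n - d 1 := by rw [fin2_degree] at hd; omega
    rw [Finset.sum_eq_single (d 1)]
    · rw [coeff_monomial, if_pos (by rw [← hd0]; exact (fin2_finsupp_eq d).symm)]
    · intro k _ hne
      rw [coeff_monomial, if_neg]
      intro hc
      apply_fun (fun u => u 1) at hc
      simp at hc
      exact hne hc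
    · intro h
      exact absurd (Finset.mem_range.mpr (by omega)) h
  · rw [if_neg hd]
    apply Finset.sum_eq_zero
    intro k hk
    rw [coeff_monomial, if_neg]
    intro hc
    apply hd
    rw [← hc, fin2_degree]
    simp only [Finset.mem_range] at hk
    simp
    omega

/-- Corollary 2.5.5 of the paper: a nonzero homogeneous harmonic polynomial of
degree `m ≥ 2` in two real variables has no critical points away from the
origin; in particular the critical point at the origin is isolated. -/
theorem harmonic_homogeneous_gradient_ne_zero
    (P : MvPolynomial (Fin 2) ℝ) (hP : P ≠ 0)
    (m : ℕ) (hm : 2 ≤ m) (hhom : P.IsHomogeneous m)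
    (hharm : pderiv 0 (pderiv 0 P) + pderiv 1 (pderiv 1 P) = 0)
    (x y : ℝ) (hxy : (x, y) ≠ (0, 0)) :
    (eval ![x, y] (pderiv 0 P), eval ![x, y] (pderiv 1 P)) ≠ (0, 0) := by
  have f : ℝ →+* ℂ := algebraMap ℝ ℂ
  set Pc : MvPolynomial (Fin 2) ℂ := map (algebraMap ℝ ℂ) P with hPcdef
  set A : MvPolynomial (Fin 2) ℂ := pderiv 0 Pc - C Complex.I * pderiv 1 Pc with hAdef
  set n := m - 1 with hn
  have hmn : m = n + 1 := by omega
  have hPc : Pc.IsHomogeneous m := hhom.map _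
  have hdegadd : ∀ (d : Fin 2 →₀ ℕ) (i : Fin 2),
      (d + Finsupp.single i 1).degree = d.degree + 1 := by
    intro d i
    rw [fin2_degree, fin2_degree]
    fin_cases i <;> simp <;> omega
  have hA0 : ∀ d : Fin 2 →₀ ℕ, d.degree ≠ n → coeff d A = 0 := by
    intro d hd
    rw [hAdef, coeff_sub, coeff_C_mul, coeff_pderiv', coeff_pderiv',
      hPc.coeff_eq_zero (d := d + Finsupp.single 0 1) (by rw [hdegadd]; omega),
      hPc.coeff_eq_zero (d := d + Finsupp.single 1 1) (by rw [hdegadd]; omega)]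
    ring
  have hD : pderiv 0 A + C Complex.I * pderiv 1 A = 0 := by
    have hcomm : pderiv 0 (pderiv 1 Pc) = pderiv 1 (pderiv 0 Pc) := by
      apply MvPolynomial.ext; intro e
      have hidx : e + Finsupp.single 0 1 + Finsupp.single 1 1
          = e + Finsupp.single 1 1 + Finsupp.single 0 1 := add_right_comm _ _ _
      simp only [coeff_pderiv', hidx, Finsupp.add_apply]
      simp [Finsupp.single_apply]
      ring
    have hh2 : pderiv 0 (pderiv 0 Pc) + pderiv 1 (pderiv 1 Pc) = 0 := by
      rw [hPcdef, pderiv_map, pderiv_map, pderiv_map, pderiv_map, ← map_add, hharm, map_zero]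
    have hI2 : (C Complex.I : MvPolynomial (Fin 2) ℂ) * C Complex.I = -1 := by
      rw [← C_mul, Complex.I_mul_I, map_neg, map_one]
    rw [hAdef, map_sub, map_sub, pderiv_C_mul, pderiv_C_mul, hcomm]
    linear_combination hh2 - pderiv 1 (pderiv 1 Pc) * hI2
  set b : ℕ → ℂ := fun k => coeff (Finsupp.single 0 (n-k) + Finsupp.single 1 k) A with hb
  have hrec : ∀ k, k < n →
      ((n-k : ℕ) : ℂ) * b k + Complex.I * ((k+1 : ℕ) : ℂ) * b (k+1) = 0 := by
    intro k hk
    have h0 := congrArg (coeff (Finsupp.single 0 (n-1-k) + Finsupp.single 1 k)) hD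
    rw [coeff_add, coeff_C_mul, coeff_pderiv', coeff_pderiv', coeff_zero] at h0
    have e0 : (Finsupp.single (0:Fin 2) (n-1-k) + Finsupp.single 1 k : Fin 2 →₀ ℕ) 0 = n-1-k := by simp
    have e1 : (Finsupp.single (0:Fin 2) (n-1-k) + Finsupp.single 1 k : Fin 2 →₀ ℕ) 1 = k := by simp
    have i0 : Finsupp.single (0:Fin 2) (n-1-k) + Finsupp.single 1 k + Finsupp.single 0 1
        = Finsupp.single 0 (n-k) + Finsupp.single 1 k := by
      ext j; fin_cases j <;> simp <;> omega
    have i1 : Finsupp.single (0:Fin 2) (n-1-k) + Finsupp.single 1 k + Finsupp.single 1 1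
        = Finsupp.single 0 (n-(k+1)) + Finsupp.single 1 (k+1) := by
      ext j; fin_cases j <;> simp <;> omega
    rw [e0, e1, i0, i1] at h0
    have hnk : n - 1 - k + 1 = n - k := by omega
    rw [hnk] at h0
    rw [hb]
    linear_combination h0
  have hclosed : ∀ k, k ≤ n → b k = (n.choose k : ℂ) * Complex.I^k * b 0 := by
    intro k
    induction k with
    | zero => intro _; simp
    | succ k ih =>
      intro hk1
      have hk : k < n := by omega
      have hrk := hrec k hk
      rw [ih (by omega)] at hrk
      have hch : ((n.choose (k+1) : ℕ) : ℂ) * ((k+1 : ℕ) : ℂ)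
          = ((n.choose k : ℕ):ℂ) * ((n - k : ℕ) : ℂ) := by
        rw [← Nat.cast_mul, ← Nat.cast_mul, Nat.choose_succ_right_eq]
      have hIk : (Complex.I * ((k+1:ℕ):ℂ)) ≠ 0 := by
        apply mul_ne_zero Complex.I_ne_zero
        exact Nat.cast_ne_zero.mpr (Nat.succ_ne_zero k)
      apply mul_left_cancel₀ hIk
      have hI2 : Complex.I * Complex.I = -1 := Complex.I_mul_I
      push_cast at hrk hch ⊢
      linear_combination hrk + (Complex.I^k * b 0) * hch
        - (((k:ℂ)+1) * (n.choose (k+1):ℂ) * Complex.I^k * b 0) * hI2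
  have hAeq : A = C (b 0) * (X 0 + C Complex.I * X 1)^n := by
    apply MvPolynomial.ext
    intro d
    rw [coeff_C_mul, coeff_zpow]
    by_cases hd : d.degree = n
    · rw [if_pos hd]
      have hd1 : d 1 ≤ n := by rw [fin2_degree] at hd; omega
      have hd0 : d 0 = n - d 1 := by rw [fin2_degree] at hd; omega
      have hbd : coeff d A = b (d 1) := by
        rw [hb]
        congr 1
        rw [← hd0]
        exact fin2_finsupp_eq d
      rw [hbd, hclosed (d 1) hd1]
      ring
    · rw [if_neg hd, mul_zero]
      exact hA0 d hd
  intro hcon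
  have h0 : eval ![x, y] (pderiv 0 P) = 0 := congrArg Prod.fst hcon
  have h1 : eval ![x, y] (pderiv 1 P) = 0 := congrArg Prod.snd hcon
  have hz : (x : ℂ) + Complex.I * y ≠ 0 := by
    intro h
    apply hxy
    rw [Complex.ext_iff] at h
    simp at h
    simp [h.1, h.2]
  have hevmap : ∀ Q : MvPolynomial (Fin 2) ℝ,
      eval ![(x:ℂ),(y:ℂ)] (map (algebraMap ℝ ℂ) Q) = ((eval ![x,y] Q : ℝ) : ℂ) := by
    intro Q
    rw [eval_map]
    have hc := eval₂_comp_left (algebraMap ℝ ℂ) (RingHom.id ℝ) ![x,y] Q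
    rw [RingHom.comp_id] at hc
    have hfun : (algebraMap ℝ ℂ) ∘ ![x,y] = ![(x:ℂ),(y:ℂ)] := by
      funext i; fin_cases i <;> simp
    rw [hfun] at hc
    rw [← hc, eval₂_id]
    rfl
  have hevA : eval ![(x:ℂ), (y:ℂ)] A = 0 := by
    rw [hAdef, hPcdef, pderiv_map, pderiv_map, map_sub, eval_mul, eval_C,
      hevmap, hevmap, h0, h1]
    simp
  rw [hAeq] at hevA
  have hb0 : b 0 = 0 := by
    rw [eval_mul, eval_C, eval_pow] at hevA
    rcases mul_eq_zero.mp hevA with h | h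
    · exact h
    · exfalso
      apply hz
      have := pow_eq_zero_iff (n := n) (by omega) |>.mp h
      simpa using this
  have hA_zero : A = 0 := by
    rw [hAeq, hb0, map_zero, zero_mul]
  have hkey : ∀ d : Fin 2 →₀ ℕ,
      ((coeff d (pderiv 0 P) : ℝ):ℂ) - Complex.I * ((coeff d (pderiv 1 P) : ℝ):ℂ) = 0 := by
    intro d
    have := congrArg (coeff d) hA_zero
    rw [hAdef, hPcdef, pderiv_map, pderiv_map, coeff_sub, coeff_C_mul, coeff_map,
      coeff_map, coeff_zero] at this
    exact this
  have hgrad0 : pderiv 0 P = 0 := by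
    apply MvPolynomial.ext
    intro d
    have := hkey d
    rw [Complex.ext_iff] at this
    simpa using this.1
  have hgrad1 : pderiv 1 P = 0 := by
    apply MvPolynomial.ext
    intro d
    have := hkey d
    rw [Complex.ext_iff] at this
    simpa using this.2
  apply hP
  apply MvPolynomial.ext
  intro d
  rw [coeff_zero]
  by_cases hd : d.degree = m
  · have hpos : d 0 + d 1 = m := by rw [← fin2_degree, hd]
    have hor : 0 < d 0 ∨ 0 < d 1 := by omega
    rcases hor with h | h
    · have hle : Finsupp.single (0:Fin 2) 1 ≤ d := by rw [Finsupp.single_le_iff]; omega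
      have hc := congrArg (coeff (d - Finsupp.single 0 1)) hgrad0
      rw [coeff_pderiv', coeff_zero, tsub_add_cancel_of_le hle] at hc
      have hne : (((d - Finsupp.single 0 1 : Fin 2 →₀ ℕ) 0 + 1 : ℕ) : ℝ) ≠ 0 :=
        Nat.cast_ne_zero.mpr (Nat.succ_ne_zero _)
      exact (mul_eq_zero.mp hc).resolve_left hne
    · have hle : Finsupp.single (1:Fin 2) 1 ≤ d := by rw [Finsupp.single_le_iff]; omega
      have hc := congrArg (coeff (d - Finsupp.single 1 1)) hgrad1
      rw [coeff_pderiv', coeff_zero, tsub_add_cancel_of_le hle] at hc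
      have hne : (((d - Finsupp.single 1 1 : Fin 2 →₀ ℕ) 1 + 1 : ℕ) : ℝ) ≠ 0 :=
        Nat.cast_ne_zero.mpr (Nat.succ_ne_zero _)
      exact (mul_eq_zero.mp hc).resolve_left hne
  · exact hhom.coeff_eq_zero hd
end

section
/- Let E be a finite-dimensional real normed vector space of dimension at least 1, and let (K_m)_{m∈ℕ} and K_∞ be nonempty compact convex subsets of E. If (K_m) converges to K_∞ in the Hausdorff distance, then the sequence of topological boundaries (∂K_m)_{m∈ℕ} converges to ∂K_∞ in the Hausdorff distance. -/
open Filter Metric Set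

/-- A preconnected set meeting both `t` and its complement meets `frontier t`. -/
lemma aux_inter_frontier_nonempty {α : Type*} [TopologicalSpace α] {s t : Set α}
    (hs : IsPreconnected s) (h1 : (s ∩ t).Nonempty) (h2 : (s \ t).Nonempty) :
    (s ∩ frontier t).Nonempty := by
  by_contra h
  rw [Set.not_nonempty_iff_eq_empty] at h
  have hmiss : ∀ x ∈ s, x ∉ frontier t := fun x hx hf =>
    (Set.eq_empty_iff_forall_notMem.1 h x) ⟨hx, hf⟩
  have hcov : s ⊆ interior t ∪ (closure t)ᶜ := by
    intro x hx
    by_cases hxc : x ∈ closure t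
    · left
      by_contra hxi
      exact hmiss x hx ⟨hxc, hxi⟩
    · right; exact hxc
  have h1' : (s ∩ interior t).Nonempty := by
    obtain ⟨x, hxs, hxt⟩ := h1
    refine ⟨x, hxs, ?_⟩
    rcases hcov hxs with h' | h'
    · exact h'
    · exact absurd (subset_closure hxt) h'
  have h2' : (s ∩ (closure t)ᶜ).Nonempty := by
    obtain ⟨x, hxs, hxt⟩ := h2
    refine ⟨x, hxs, ?_⟩
    rcases hcov hxs with h' | h'
    · exact absurd (interior_subset h') hxt
    · exact h'
  obtain ⟨x, _, hxu, hxv⟩ := hs (interior t) (closure t)ᶜ isOpen_interior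
    isClosed_closure.isOpen_compl hcov h1' h2'
  exact hxv (subset_closure (interior_subset hxu))

lemma aux_dist_segment {E : Type*} [NormedAddCommGroup E] [NormedSpace ℝ E]
    {x b c : E} (h : c ∈ segment ℝ x b) : dist x c ≤ dist x b := by
  obtain ⟨a, t, ha, ht, hat, rfl⟩ := h
  have : a • x + t • b - x = t • (b - x) := by
    have hax : a • x = x - t • x := by
      rw [eq_sub_iff_add_eq, ← add_smul]
      rw [show a + t = 1 from hat, one_smul]
    rw [hax, smul_sub]; abel
  rw [dist_eq_norm, norm_sub_rev, this, norm_smul, Real.norm_eq_abs, abs_of_nonneg ht,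
    dist_eq_norm, norm_sub_rev]
  have ht1 : t ≤ 1 := by linarith
  have hm := mul_le_mul_of_nonneg_right ht1 (norm_nonneg (x - b))
  rw [one_mul] at hm
  exact hm

/-- Separation lemma: a closed ball of radius `> r` around a point outside a compact
convex set cannot be contained in the `r`-neighborhood of that set. -/
lemma aux_sep {E : Type*} [NormedAddCommGroup E] [NormedSpace ℝ E] {L : Set E}
    (hLcv : Convex ℝ L) (hLcp : IsCompact L) (hLne : L.Nonempty) {y : E} (hy : y ∉ L)
    {r t : ℝ} (hr0 : 0 ≤ r) (hrt : r < t)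
    (h : ∀ z ∈ Metric.closedBall y t, Metric.infDist z L ≤ r) : False := by
  have ht0 : 0 < t := lt_of_le_of_lt hr0 hrt
  obtain ⟨f, u, hu, hb⟩ := geometric_hahn_banach_point_closed hLcv hLcp.isClosed hy
  have hf0 : f ≠ 0 := by
    intro h0
    obtain ⟨b, hbL⟩ := hLne
    have h1 := hb b hbL
    rw [h0] at hu h1
    simp at hu h1
    linarith
  have hfn : 0 < ‖f‖ := by
    rwa [norm_pos_iff]
  have hlt : r * ‖f‖ / t < ‖f‖ := by
    rw [div_lt_iff₀ ht0]
    nlinarith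
  obtain ⟨v, hv1, hvc⟩ := f.exists_lt_apply_of_lt_opNorm hlt
  -- choose w with `f w = ‖f v‖`
  obtain ⟨w, hw1, hwv⟩ : ∃ w : E, ‖w‖ < 1 ∧ f w = ‖f v‖ := by
    rcases le_or_gt 0 (f v) with hfv | hfv
    · exact ⟨v, hv1, by rw [Real.norm_eq_abs, abs_of_nonneg hfv]⟩
    · exact ⟨-v, by simpa using hv1, by
        rw [map_neg, Real.norm_eq_abs, abs_of_neg hfv]⟩
  have hfw : r * ‖f‖ / t < f w := by rw [hwv]; exact hvc
  set z := y - t • w with hz_def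
  have hzball : z ∈ Metric.closedBall y t := by
    rw [Metric.mem_closedBall, dist_eq_norm, hz_def]
    have : y - t • w - y = -(t • w) := by abel
    rw [this, norm_neg, norm_smul, Real.norm_eq_abs, abs_of_pos ht0]
    nlinarith [hw1, norm_nonneg w]
  obtain ⟨b, hbL, hbd⟩ := hLcp.exists_infDist_eq_dist hLne z
  have hL : Metric.infDist z L ≤ r := h z hzball
  -- lower bound on dist z b
  have hfz : f z = f y - t * f w := by rw [hz_def, map_sub, map_smul, smul_eq_mul]
  have hfb : u < f b := hb b hbL
  have key : r * ‖f‖ < f b - f z := by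
    rw [hfz]
    have : t * (r * ‖f‖ / t) < t * f w := by
      exact mul_lt_mul_of_pos_left hfw ht0
    rw [mul_div_cancel₀ _ (ne_of_gt ht0)] at this
    linarith
  have hdist : f b - f z ≤ ‖f‖ * dist z b := by
    calc f b - f z = f (b - z) := (map_sub f b z).symm
      _ ≤ ‖f (b - z)‖ := le_abs_self _
      _ ≤ ‖f‖ * ‖b - z‖ := f.le_opNorm _
      _ = ‖f‖ * dist z b := by rw [dist_eq_norm, norm_sub_rev]
  have : r < dist z b := by
    by_contra hcon
    push_neg at hcon
    nlinarith
  rw [← hbd] at this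
  linarith

/-- One-sided frontier bound for nonempty compact convex sets. -/
lemma aux_frontier_infDist_le {E : Type*} [NormedAddCommGroup E] [NormedSpace ℝ E]
    {K₁ K₂ : Set E} (h1c : IsCompact K₁) (_h1v : Convex ℝ K₁) (h1n : K₁.Nonempty)
    (h2c : IsCompact K₂) (h2v : Convex ℝ K₂) (h2n : K₂.Nonempty)
    {x : E} (hx : x ∈ frontier K₁) :
    Metric.infDist x (frontier K₂) ≤ Metric.hausdorffDist K₁ K₂ := by
  set r := Metric.hausdorffDist K₁ K₂ with hr_def
  have hr0 : 0 ≤ r := Metric.hausdorffDist_nonneg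
  have hfin : EMetric.hausdorffEdist K₁ K₂ ≠ ⊤ :=
    Metric.hausdorffEdist_ne_top_of_nonempty_of_bounded h1n h2n h1c.isBounded h2c.isBounded
  by_contra hlt
  push_neg at hlt
  set s := Metric.infDist x (frontier K₂) with hs_def
  by_cases hxK2 : x ∈ K₂
  · by_cases hxf : x ∈ frontier K₂
    · have : s ≤ 0 := by
        rw [hs_def]
        have h0 : Metric.infDist x (frontier K₂) ≤ dist x x :=
          Metric.infDist_le_dist_of_mem hxf
        simpa using h0
      linarith
    · -- x ∈ interior K₂
      have hxint : x ∈ interior K₂ := by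
        by_contra hi
        exact hxf (h2c.isClosed.frontier_eq ▸ ⟨hxK2, hi⟩)
      have hball : Metric.ball x s ⊆ K₂ := by
        intro z hz
        by_contra hzK
        have hseg : (segment ℝ x z ∩ frontier K₂).Nonempty := by
          apply aux_inter_frontier_nonempty (convex_segment x z).isPreconnected
          · exact ⟨x, left_mem_segment ℝ x z, hxK2⟩
          · exact ⟨z, right_mem_segment ℝ x z, hzK⟩
        obtain ⟨c, hcseg, hcf⟩ := hseg
        have h1 : s ≤ dist x c := Metric.infDist_le_dist_of_mem hcf
        have h2 : dist x c ≤ dist x z := aux_dist_segment hcseg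
        rw [Metric.mem_ball, dist_comm] at hz
        linarith
      -- pick y outside K₁ near x
      have hxcl : x ∈ closure K₁ᶜ := by
        rw [closure_compl]; exact hx.2
      obtain ⟨y, hyK, hyd⟩ : ∃ y ∈ K₁ᶜ, dist x y < (s - r) / 2 := by
        have := (Metric.mem_closure_iff).1 hxcl ((s - r) / 2) (by linarith)
        obtain ⟨y, hy1, hy2⟩ := this
        exact ⟨y, hy1, hy2⟩
      refine aux_sep _h1v h1c h1n hyK hr0 (show r < (s + r) / 2 by linarith) ?_
      intro z hz
      have hzK2 : z ∈ K₂ := by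
        apply hball
        rw [Metric.mem_ball]
        have h1 : dist z y ≤ (s + r) / 2 := Metric.mem_closedBall.1 hz
        have h2 : dist z x ≤ dist z y + dist y x := dist_triangle z y x
        rw [dist_comm y x] at h2
        linarith
      calc Metric.infDist z K₁ ≤ Metric.hausdorffDist K₂ K₁ :=
            Metric.infDist_le_hausdorffDist_of_mem hzK2
              (by rwa [EMetric.hausdorffEdist_comm])
        _ = r := by rw [hr_def, Metric.hausdorffDist_comm]
  · -- x ∉ K₂, but x ∈ K₁
    have hxK1 : x ∈ K₁ := h1c.isClosed.closure_eq ▸ hx.1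
    have hinf : Metric.infDist x K₂ ≤ r := Metric.infDist_le_hausdorffDist_of_mem hxK1 hfin
    obtain ⟨b, hbK, hbd⟩ := h2c.exists_infDist_eq_dist h2n x
    have hseg : (segment ℝ x b ∩ frontier K₂).Nonempty := by
      apply aux_inter_frontier_nonempty (convex_segment x b).isPreconnected
      · exact ⟨b, right_mem_segment ℝ x b, hbK⟩
      · exact ⟨x, left_mem_segment ℝ x b, hxK2⟩
    obtain ⟨c, hcseg, hcf⟩ := hseg
    have h1 : s ≤ dist x c := Metric.infDist_le_dist_of_mem hcf
    have h2 : dist x c ≤ dist x b := aux_dist_segment hcseg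
    rw [← hbd] at h2
    linarith

/-- Continuity of the boundary operator on nonempty compact convex subsets of a
finite-dimensional normed space under Hausdorff convergence (the content of
Lemma 2.2.2 of the paper): if `K m → K∞` in Hausdorff distance then
`∂(K m) → ∂K∞` in Hausdorff distance. -/
theorem frontier_tendsto_of_hausdorffDist_tendsto
    {E : Type*} [NormedAddCommGroup E] [NormedSpace ℝ E] [FiniteDimensional ℝ E]
    (hdim : 1 ≤ Module.finrank ℝ E)
    (K : ℕ → Set E) (Klim : Set E)
    (hKne : ∀ m, (K m).Nonempty) (hKcp : ∀ m, IsCompact (K m))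
    (hKcv : ∀ m, Convex ℝ (K m))
    (hne : Klim.Nonempty) (hcp : IsCompact Klim) (hcv : Convex ℝ Klim)
    (hconv : Tendsto (fun m => Metric.hausdorffDist (K m) Klim) atTop (nhds 0)) :
    Tendsto (fun m => Metric.hausdorffDist (frontier (K m)) (frontier Klim))
      atTop (nhds 0) := by
  apply squeeze_zero (fun m => Metric.hausdorffDist_nonneg) _ hconv
  intro m
  apply Metric.hausdorffDist_le_of_infDist Metric.hausdorffDist_nonneg
  · intro x hx
    exact aux_frontier_infDist_le (hKcp m) (hKcv m) (hKne m) hcp hcv hne hx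
  · intro x hx
    rw [Metric.hausdorffDist_comm]
    exact aux_frontier_infDist_le hcp hcv hne (hKcp m) (hKcv m) (hKne m) hx
end
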